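/- arXiv:1603.02372 — 11 statements merged into one kernel-verified Lean document; each statement's English description precedes it below -/
import Mathlib

section
/- Let Γ be a finite simple graph with at least two vertices which is of weak type II. Then for all distinct vertices v, w of Γ, if lk(w) ⊆ St(v), then v and w are adjacent. (In other words, the outer automorphism group of the right-angled Artin group G(Γ) contains no non-adjacent transvections.) -/
open SimpleGraph

variable {V : Type*}

/-- The closed star of a vertex: the vertex together with its neighbors. -/
def gstar (G : SimpleGraph V) (v : V) : Set V := insert v (G.neighborSet v)

/-- `a` and `b` lie in the same connected component of the subgraph induced on `s`. -/
def SameComp (G : SimpleGraph V) (s : Set V) (a b : V) : Prop :=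
  ∃ (ha : a ∈ s) (hb : b ∈ s), (G.induce s).Reachable ⟨a, ha⟩ ⟨b, hb⟩

/-- `a` and `b` lie in different connected components of the subgraph induced on `s`. -/
def DiffComp (G : SimpleGraph V) (s : Set V) (a b : V) : Prop :=
  a ∈ s ∧ b ∈ s ∧ ¬ SameComp G s a b

/-- `Γ` is of weak type II. -/
def WeakTypeII (G : SimpleGraph V) : Prop :=
  G.Connected ∧ ∀ v w : V, G.dist v w = 2 →
    (G.induce ((G.neighborSet v ∩ G.neighborSet w)ᶜ)).Connected

/-- `Γ` is of type II. -/
def TypeII (G : SimpleGraph V) : Prop :=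
  G.Connected ∧ ∀ v w : V, v ≠ w →
    (G.induce ((G.neighborSet v ∩ G.neighborSet w)ᶜ)).Connected

/-- if Γ has at least two vertices and is of weak type II, then for all distinct
vertices `v, w` with `lk(w) ⊆ St(v)`, the vertices `v` and `w` are adjacent. -/
theorem stmt_1 [Fintype V] (G : SimpleGraph V) (hcard : 1 < Fintype.card V)
    (h : WeakTypeII G) :
    ∀ v w : V, v ≠ w → G.neighborSet w ⊆ gstar G v → G.Adj v w := by
  intro v w hvw hsub
  by_contra hadj
  -- lk(w) ⊆ lk(v)
  have hlk : G.neighborSet w ⊆ G.neighborSet v := by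
    intro u hu
    rcases hsub hu with h1 | h2
    · exact absurd (h1 ▸ hu).symm hadj
    · exact h2
  -- w has a neighbor
  obtain ⟨u, hu⟩ : ∃ u, G.Adj w u := by
    obtain ⟨x, hx⟩ := Fintype.exists_ne_of_one_lt_card hcard w
    obtain ⟨p⟩ := h.1.preconnected w x
    have hn : ¬ p.Nil := p.not_nil_of_ne (Ne.symm hx)
    exact ⟨p.getVert 1, p.adj_snd hn⟩
  have huv : G.Adj v u := hlk hu
  -- dist v w = 2
  have hdist : G.dist v w = 2 := by
    have hle : G.dist v w ≤ 2 := by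
      have : G.dist v w ≤ (Walk.cons huv (Walk.cons hu.symm Walk.nil)).length :=
        SimpleGraph.dist_le _
      simpa using this
    have h0 : G.dist v w ≠ 0 := by
      simp [SimpleGraph.dist_eq_zero_iff_eq_or_not_reachable, hvw,
        h.1.preconnected v w]
    have h1 : G.dist v w ≠ 1 := by
      intro hc
      exact hadj ((SimpleGraph.dist_eq_one_iff_adj).mp hc)
    omega
  -- induced graph on complement is connected
  have hcon := h.2 v w hdist
  have hwin : w ∈ (G.neighborSet v ∩ G.neighborSet w)ᶜ := by
    simp [SimpleGraph.neighborSet]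
  have hvin : v ∈ (G.neighborSet v ∩ G.neighborSet w)ᶜ := by
    simp [SimpleGraph.neighborSet]
  obtain ⟨p⟩ := hcon.preconnected ⟨w, hwin⟩ ⟨v, hvin⟩
  have hne : (⟨w, hwin⟩ : ((G.neighborSet v ∩ G.neighborSet w)ᶜ : Set V)) ≠ ⟨v, hvin⟩ := by
    simp [Subtype.ext_iff, hvw.symm]
  have hn : ¬ p.Nil := p.not_nil_of_ne hne
  have hadj2 := p.adj_snd hn
  -- this adjacency in the induced graph gives a neighbor of w outside lk v ∩ lk w
  have hGadj : G.Adj w ((p.getVert 1 : _) : V) := hadj2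
  have : ((p.getVert 1 : _) : V) ∈ (G.neighborSet v ∩ G.neighborSet w)ᶜ := (p.getVert 1).2
  exact this ⟨hlk hGadj, hGadj⟩
end

section
/- Let Γ be a finite simple graph with at least two vertices which is of weak type II, and let v be a vertex of Γ. Then every connected component of the induced subgraph on the complement of St(v) contains at least two vertices. -/
open SimpleGraph

variable {V : Type*}

/-- if Γ has at least two vertices and is of weak type II, then every connected
component of the induced subgraph on the complement of `St(v)` contains at least two vertices. -/
theorem stmt_2 [Fintype V] (G : SimpleGraph V) (hcard : 1 < Fintype.card V)
    (h : WeakTypeII G) (v : V) :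
    ∀ u : V, u ∈ (gstar G v)ᶜ → ∃ w : V, w ≠ u ∧ SameComp G (gstar G v)ᶜ u w := by
  intro u hu
  have hu' := hu
  simp only [gstar, Set.mem_compl_iff, Set.mem_insert_iff, mem_neighborSet, not_or] at hu'
  obtain ⟨hne, hnadj⟩ := hu'
  by_cases hw : ∃ w, G.Adj u w ∧ w ∈ (gstar G v)ᶜ
  · obtain ⟨w, hadj, hwst⟩ := hw
    refine ⟨w, fun hwu => G.irrefl (hwu ▸ hadj), hu, hwst, Adj.reachable ?_⟩
    exact hadj
  · push_neg at hw
    exfalso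
    have hNuv : ∀ w, G.Adj u w → G.Adj v w := by
      intro w haw
      have := hw w haw
      simp only [Set.mem_compl_iff, not_not, gstar, Set.mem_insert_iff, mem_neighborSet] at this
      rcases this with hwv | hwv
      · exact absurd (hwv ▸ haw).symm hnadj
      · exact hwv
    obtain ⟨p⟩ := h.1 u v
    cases p with
    | nil => exact hne rfl
    | @cons _ b _ ha q =>
      have hvb : G.Adj v b := hNuv b ha
      have hd : G.dist v u = 2 := by
        have hle : G.dist v u ≤ 2 := by
          have := SimpleGraph.dist_le (Walk.cons hvb (Walk.cons ha.symm Walk.nil))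
          simpa using this
        have h0 : G.dist v u ≠ 0 := by
          intro h0
          exact (Ne.symm hne) (h.1.dist_eq_zero_iff.mp h0)
        have h1 : G.dist v u ≠ 1 := by
          intro h1
          exact hnadj (dist_eq_one_iff_adj.mp h1)
        omega
      have hcon := h.2 v u hd
      have hs : G.neighborSet v ∩ G.neighborSet u = G.neighborSet u := by
        ext x
        simp only [Set.mem_inter_iff, mem_neighborSet]
        exact ⟨fun hx => hx.2, fun hx => ⟨hNuv x hx, hx⟩⟩
      rw [hs] at hcon
      have hus : u ∈ (G.neighborSet u)ᶜ := by simp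
      have hvs : v ∈ (G.neighborSet u)ᶜ := by
        simp only [Set.mem_compl_iff, mem_neighborSet]
        exact fun hx => hnadj hx.symm
      obtain ⟨q⟩ := hcon.preconnected ⟨u, hus⟩ ⟨v, hvs⟩
      cases q with
      | nil => exact hne rfl
      | @cons _ c _ hac _ =>
        have : G.Adj u c.val := hac
        exact c.prop this
end

section
/- Let Γ be a finite simple graph of weak type II, and let v₁, v₂ be vertices with d(v₁,v₂) ≥ 2. Let C be the vertex set of a connected component of the induced subgraph on the complement of St(v₁) such that v₂ ∉ C. Then C ∪ {v₁} is contained in a single connected component of the induced subgraph on the complement of St(v₂). In particular, C ∩ St(v₂) = ∅. -/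
/-!
Since `v₁` and `v₂` are not adjacent, removing the common link `lk v₁ ∩ lk v₂` leaves a connected
graph (by weak type II when `d(v₁,v₂) = 2`, and because the common link is empty otherwise). A walk
there from `C` to `v₁` leaves `C` along an edge `z w` with `z ∈ C` and `w ∈ lk v₁ \ lk v₂`, so
`w ∉ St v₂`. The component `C` misses `St v₂`, since a vertex of `C` adjacent to `v₂` would drag
`v₂ ∉ St v₁` into `C`; hence `v₁ - w - z` followed by paths inside `C` avoids `St v₂`.
-/

open SimpleGraph

variable {V : Type*}

namespace SameComp

variable {G : SimpleGraph V} {s t : Set V} {a b c v : V}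

lemma refl (ha : a ∈ s) : SameComp G s a a := ⟨ha, ha, Reachable.refl _⟩

lemma symm (h : SameComp G s a b) : SameComp G s b a :=
  let ⟨ha, hb, r⟩ := h; ⟨hb, ha, r.symm⟩

lemma trans (h : SameComp G s a b) (h' : SameComp G s b c) : SameComp G s a c :=
  let ⟨ha, _, r⟩ := h; let ⟨_, hc, r'⟩ := h'; ⟨ha, hc, r.trans r'⟩

lemma of_adj (hab : G.Adj a b) (ha : a ∈ s) (hb : b ∈ s) : SameComp G s a b :=
  ⟨ha, hb, Adj.reachable (by simpa using hab)⟩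

lemma mem_of_adj_closed {D : Set V}
    (hD : ∀ c d, c ∈ s → d ∈ s → G.Adj c d → c ∈ D → d ∈ D)
    (h : SameComp G s a b) (ha : a ∈ D) : b ∈ D := by
  obtain ⟨_, _, ⟨p⟩⟩ := h
  suffices ∀ (u w : s), (G.induce s).Walk u w → (u : V) ∈ D → (w : V) ∈ D from this _ _ p ha
  intro u w q
  induction q with
  | nil => exact id
  | cons hadj _ ih =>
    exact fun hu => ih (hD _ _ (Subtype.prop _) (Subtype.prop _) (by simpa using hadj) hu)

lemma mono_of_forall (h : SameComp G s a b) (ht : ∀ c, SameComp G s a c → c ∈ t) :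
    SameComp G t a b := by
  refine mem_of_adj_closed (D := {c | SameComp G s a c → SameComp G t a c}) ?_ h
    (fun haa => refl (ht a haa)) h
  intro c d hc hd hcd hac had
  have hsc : SameComp G s a c := had.trans (of_adj hcd.symm hd hc)
  exact (hac hsc).trans (of_adj hcd (ht c hsc) (ht d had))

lemma notMem_gstar (h : SameComp G s a b) (hv : v ∈ s) (hav : ¬ SameComp G s a v) :
    b ∉ gstar G v := by
  rintro (rfl | hbv)
  · exact hav h
  · exact hav (h.trans (of_adj (G.adj_symm hbv) h.2.1 hv))

end SameComp

variable {G : SimpleGraph V}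

lemma notMem_gstar_of_two_le_dist {v w : V} (hd : 2 ≤ G.dist v w) : v ∉ gstar G w := by
  rintro (rfl | hadj)
  · simp at hd
  · have := dist_eq_one_iff_adj.2 (G.adj_symm hadj)
    omega

lemma WeakTypeII.induce_compl_inter_neighborSet_connected (h : WeakTypeII G) {v w : V}
    (hd : 2 ≤ G.dist v w) : (G.induce (G.neighborSet v ∩ G.neighborSet w)ᶜ).Connected := by
  by_cases hcommon : ∃ u, u ∈ G.neighborSet v ∩ G.neighborSet w
  · obtain ⟨u, hvu, hwu⟩ := hcommon
    have : G.dist v w ≤ 2 := dist_le (Walk.cons hvu (Walk.cons (G.adj_symm hwu) Walk.nil))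
    exact h.2 v w (by omega)
  · rw [Set.eq_empty_iff_forall_notMem.2 (not_exists.1 hcommon), Set.compl_empty]
    exact (induceUnivIso G).connected_iff.2 h.1

lemma exists_sameComp_adj_of_induce_compl_connected {T : Set V} {v a : V}
    (hT : (G.induce Tᶜ).Connected) (hv : v ∉ T) (ha : a ∉ gstar G v) (haT : a ∉ T) :
    ∃ z w, SameComp G (gstar G v)ᶜ a z ∧ G.Adj z w ∧ G.Adj v w ∧ w ∉ T := by
  obtain ⟨p⟩ := hT.preconnected ⟨a, haT⟩ ⟨v, hv⟩
  obtain ⟨d, -, hz, hw⟩ := p.exists_boundary_dart {u | SameComp G (gstar G v)ᶜ a u}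
    (SameComp.refl ha) (fun hav => hav.2.1 (Set.mem_insert v _))
  have hzw : G.Adj d.fst d.snd := by simpa using d.adj
  have hz_out : (d.fst : V) ∉ gstar G v := hz.2.1
  have hw_star : (d.snd : V) ∈ gstar G v := by
    by_contra hw_out
    exact hw (hz.trans (SameComp.of_adj hzw hz_out hw_out))
  have hvw : G.Adj v d.snd := by
    rcases hw_star with hwv | hvw
    · exact absurd (Set.mem_insert_of_mem _ (hwv ▸ G.adj_symm hzw)) hz_out
    · exact hvw
  exact ⟨d.fst, d.snd, hz, hzw, hvw, d.snd.2⟩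

theorem stmt_3_general (G : SimpleGraph V) (h : WeakTypeII G)
    (v₁ v₂ : V) (hd : 2 ≤ G.dist v₁ v₂)
    (C : Set V) (hC : ∃ a ∈ C, C = {b | SameComp G (gstar G v₁)ᶜ a b})
    (hv₂ : v₂ ∉ C) :
    (∀ x ∈ C, SameComp G (gstar G v₂)ᶜ v₁ x) ∧ C ∩ gstar G v₂ = ∅ := by
  obtain ⟨a, haC, rfl⟩ := hC
  have hv₁ : v₁ ∉ gstar G v₂ := notMem_gstar_of_two_le_dist hd
  have hC₂ : ∀ c, SameComp G (gstar G v₁)ᶜ a c → c ∉ gstar G v₂ := fun c hc =>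
    hc.notMem_gstar (notMem_gstar_of_two_le_dist (G.dist_comm ▸ hd)) hv₂
  have ha : a ∉ gstar G v₁ := haC.1
  obtain ⟨z, w, haz, hzw, hv₁w, hw₂⟩ := exists_sameComp_adj_of_induce_compl_connected
    (h.induce_compl_inter_neighborSet_connected hd) (fun hv => G.irrefl hv.1)
    ha (fun haT => ha (Set.mem_insert_of_mem _ haT.1))
  have hw : w ∉ gstar G v₂ := by
    rintro (rfl | hv₂w)
    · exact hv₁ (Set.mem_insert_of_mem _ (G.adj_symm hv₁w))
    · exact hw₂ ⟨hv₁w, hv₂w⟩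
  refine ⟨fun x hx => ?_, Set.eq_empty_iff_forall_notMem.2 fun c hc => hC₂ c hc.1 hc.2⟩
  have hv₁z : SameComp G (gstar G v₂)ᶜ v₁ z :=
    (SameComp.of_adj hv₁w hv₁ hw).trans (SameComp.of_adj hzw.symm hw (hC₂ z haz))
  exact (hv₁z.trans (haz.mono_of_forall hC₂).symm).trans (hx.mono_of_forall hC₂)

/-- Γ of weak type II, `d(v₁,v₂) ≥ 2`, and `C` the vertex set of a connected
component of the complement of `St(v₁)` with `v₂ ∉ C`.  Then `C ∪ {v₁}` lies in a single
connected component of the complement of `St(v₂)`; in particular `C ∩ St(v₂) = ∅`. -/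
theorem stmt_3 [Fintype V] (G : SimpleGraph V) (h : WeakTypeII G)
    (v₁ v₂ : V) (hd : 2 ≤ G.dist v₁ v₂)
    (C : Set V) (hC : ∃ a ∈ C, C = {b | SameComp G (gstar G v₁)ᶜ a b})
    (hv₂ : v₂ ∉ C) :
    (∀ x ∈ C, SameComp G (gstar G v₂)ᶜ v₁ x) ∧ C ∩ gstar G v₂ = ∅ :=
  stmt_3_general G h v₁ v₂ hd C hC hv₂
end

section
/- Let Γ be a finite simple graph of type II, let S be a finite set of vertices of Γ, and let E ⊆ S be tight in S. For vertices a, b ∈ S \ E, define a <_E b if there exists k ∈ E such that b and k lie in different connected components of the induced subgraph on the complement of St(a). Then the relation ≤_E (the reflexive closure of <_E) is a partial order on S \ E; in particular, <_E is irreflexive, antisymmetric (a <_E b and b <_E a cannot both hold), and transitive. -/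
open SimpleGraph

variable {V : Type*}

/-- `E` is tight in `S`: for every `u ∈ S \ E`, all vertices of `E \ St(u)` lie in a single
connected component of the induced subgraph on the complement of `St(u)`. -/
def Tight (G : SimpleGraph V) (S E : Set V) : Prop :=
  E ⊆ S ∧ ∀ u ∈ S \ E, ∀ a ∈ E, ∀ b ∈ E,
    a ∉ gstar G u → b ∉ gstar G u → SameComp G (gstar G u)ᶜ a b

/-- `a <_E b`: there is `k ∈ E` such that `b` and `k` lie in different connected components
of the induced subgraph on the complement of `St(a)`. -/
def ltE (G : SimpleGraph V) (E : Set V) (a b : V) : Prop :=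
  ∃ k ∈ E, DiffComp G (gstar G a)ᶜ b k

lemma sc_refl {G : SimpleGraph V} {s : Set V} {a : V} (ha : a ∈ s) : SameComp G s a a :=
  ⟨ha, ha, Reachable.refl _⟩

lemma sc_symm {G : SimpleGraph V} {s : Set V} {a b : V} (h : SameComp G s a b) :
    SameComp G s b a := by
  obtain ⟨ha, hb, r⟩ := h; exact ⟨hb, ha, r.symm⟩

lemma sc_trans {G : SimpleGraph V} {s : Set V} {a b c : V} (h : SameComp G s a b)
    (h' : SameComp G s b c) : SameComp G s a c := by
  obtain ⟨ha, hb, r⟩ := h; obtain ⟨hb', hc, r'⟩ := h'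
  exact ⟨ha, hc, r.trans r'⟩

lemma sc_adj {G : SimpleGraph V} {s : Set V} {a b : V} (ha : a ∈ s) (hb : b ∈ s)
    (h : G.Adj a b) : SameComp G s a b :=
  ⟨ha, hb, Adj.reachable h⟩

lemma sc_mem_left {G : SimpleGraph V} {s : Set V} {a b : V} (h : SameComp G s a b) : a ∈ s := by
  obtain ⟨ha, -, -⟩ := h; exact ha

lemma reach_ind {G : SimpleGraph V} {s : Set V} (P : V → Prop)
    (step : ∀ u v, u ∈ s → v ∈ s → G.Adj u v → P u → P v) :
    ∀ (x y : s), (G.induce s).Reachable x y → P x.val → P y.val := by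
  intro x y h hx
  obtain ⟨w⟩ := h
  induction w with
  | nil => exact hx
  | cons h' p ih => exact ih (step _ _ (Subtype.prop _) (Subtype.prop _) h' hx)

lemma mem_gstar_compl {G : SimpleGraph V} {a x : V} :
    x ∈ (gstar G a)ᶜ ↔ x ≠ a ∧ ¬ G.Adj a x := by
  simp [gstar, not_or]

/-- Core lemma: if `b` and `k` lie in different components of `Γ ∖ St(a)`, then `k ∉ St(b)`,
`a ∉ St(b)`, and `a` and `k` lie in the same component of `Γ ∖ St(b)`. -/
lemma keyL2 {G : SimpleGraph V} (h : TypeII G) {a b k : V}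
    (hb : b ∈ (gstar G a)ᶜ) (hk : k ∈ (gstar G a)ᶜ)
    (hns : ¬ SameComp G (gstar G a)ᶜ b k) :
    k ∈ (gstar G b)ᶜ ∧ a ∈ (gstar G b)ᶜ ∧ SameComp G (gstar G b)ᶜ a k := by
  obtain ⟨hbne, hbadj⟩ := mem_gstar_compl.mp hb
  obtain ⟨hkne, hkadj⟩ := mem_gstar_compl.mp hk
  have hkb : k ∈ (gstar G b)ᶜ := by
    rw [mem_gstar_compl]
    refine ⟨fun hkb => ?_, fun hadj => ?_⟩
    · exact hns (hkb ▸ sc_refl hk)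
    · exact hns (sc_adj hb hk hadj)
  have hab : a ∈ (gstar G b)ᶜ := by
    rw [mem_gstar_compl]
    exact ⟨fun hab => hbne hab.symm, fun hadj => hbadj hadj.symm⟩
  refine ⟨hkb, hab, ?_⟩
  by_contra hcon
  set s₂ : Set V := (G.neighborSet a ∩ G.neighborSet b)ᶜ with hs₂
  have hk₂ : k ∈ s₂ := fun hmem => hkadj hmem.1
  have ha₂ : a ∈ s₂ := fun hmem => (G.irrefl (by exact hmem.1))
  have hconn := (h.2 a b (fun hab' => hbne hab'.symm)).preconnected ⟨k, hk₂⟩ ⟨a, ha₂⟩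
  set P : V → Prop := fun u => SameComp G (gstar G a)ᶜ u k ∧ SameComp G (gstar G b)ᶜ u k with hP
  have step : ∀ u v, u ∈ s₂ → v ∈ s₂ → G.Adj u v → P u → P v := by
    intro u v hu2 hv2 hadj hPu
    obtain ⟨hPa, hPb⟩ := hPu
    have hua : u ∈ (gstar G a)ᶜ := sc_mem_left hPa
    have hub : u ∈ (gstar G b)ᶜ := sc_mem_left hPb
    have hvb : v ∈ (gstar G b)ᶜ := by
      rw [mem_gstar_compl]
      constructor
      · rintro rfl
        exact hns (sc_trans (sc_adj hb hua hadj.symm) hPa)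
      · intro hbv
        have hva : v ∈ (gstar G a)ᶜ := by
          rw [mem_gstar_compl]
          refine ⟨fun hva => hbadj (hva ▸ hbv).symm, fun hav => hv2 ⟨hav, hbv⟩⟩
        exact hns (sc_trans (sc_adj hb hva hbv)
          (sc_trans (sc_adj hva hua hadj.symm) hPa))
    have hva : v ∈ (gstar G a)ᶜ := by
      rw [mem_gstar_compl]
      constructor
      · rintro rfl
        exact (mem_gstar_compl.mp hua).2 hadj.symm
      · intro hav
        exact hcon (sc_trans (sc_adj hab hvb hav)
          (sc_trans (sc_adj hvb hub hadj.symm) hPb))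
    exact ⟨sc_trans (sc_adj hva hua hadj.symm) hPa,
      sc_trans (sc_adj hvb hub hadj.symm) hPb⟩
  have hPk : P k := ⟨sc_refl hk, sc_refl hkb⟩
  have hPa' : P a := reach_ind P step ⟨k, hk₂⟩ ⟨a, ha₂⟩ hconn hPk
  exact (mem_gstar_compl.mp (sc_mem_left hPa'.1)).1 rfl

/-- The component of `k` in `Γ ∖ St(a)` avoids `St(b)` and lands in the component of `k`
in `Γ ∖ St(b)`, when `b` is outside it. -/
lemma keyL3 {G : SimpleGraph V} {a b k : V}
    (hb : b ∈ (gstar G a)ᶜ) (hns : ¬ SameComp G (gstar G a)ᶜ b k)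
    (hkb : k ∈ (gstar G b)ᶜ) :
    ∀ c, SameComp G (gstar G a)ᶜ k c →
      c ∈ (gstar G b)ᶜ ∧ SameComp G (gstar G b)ᶜ k c := by
  intro c hsc
  obtain ⟨hk', hc', r⟩ := hsc
  set P : V → Prop := fun u => SameComp G (gstar G a)ᶜ u k ∧ u ∈ (gstar G b)ᶜ ∧
    SameComp G (gstar G b)ᶜ k u with hP
  have step : ∀ u v, u ∈ (gstar G a)ᶜ → v ∈ (gstar G a)ᶜ → G.Adj u v → P u → P v := by
    intro u v hu hv hadj hPu
    obtain ⟨hPa, hub, hPb⟩ := hPu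
    have hva : SameComp G (gstar G a)ᶜ v k := sc_trans (sc_adj hv hu hadj.symm) hPa
    have hvb : v ∈ (gstar G b)ᶜ := by
      rw [mem_gstar_compl]
      constructor
      · rintro rfl
        exact hns hva
      · intro hbv
        exact hns (sc_trans (sc_adj hb hv hbv) hva)
    exact ⟨hva, hvb, sc_trans hPb (sc_adj hub hvb hadj)⟩
  have hPc : P c := reach_ind P step ⟨k, hk'⟩ ⟨c, hc'⟩ r ⟨sc_refl hk', hkb, sc_refl hkb⟩
  exact ⟨hPc.2.1, hPc.2.2⟩

/-- if Γ is of type II and `E ⊆ S` is tight in `S`, then `<_E` is irreflexive,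
antisymmetric and transitive on `S \ E`, so its reflexive closure is a partial order. -/
theorem stmt_5 [Fintype V] (G : SimpleGraph V) (h : TypeII G)
    (S E : Set V) (hE : E ⊆ S) (htight : Tight G S E) :
    (∀ a ∈ S \ E, ¬ ltE G E a a) ∧
    (∀ a ∈ S \ E, ∀ b ∈ S \ E, ¬ (ltE G E a b ∧ ltE G E b a)) ∧
    (∀ a ∈ S \ E, ∀ b ∈ S \ E, ∀ c ∈ S \ E,
      ltE G E a b → ltE G E b c → ltE G E a c) := by
  refine ⟨?_, ?_, ?_⟩
  · rintro a ha ⟨k, hkE, hac, -, -⟩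
    exact (mem_gstar_compl.mp hac).1 rfl
  · rintro a haSE b hbSE ⟨⟨k, hkE, hbA, hkA, hnsA⟩, ⟨k', hk'E, haB, hk'B, hnsB⟩⟩
    obtain ⟨hkb, hab, hsc⟩ := keyL2 h hbA hkA hnsA
    have hkk' : SameComp G (gstar G b)ᶜ k k' :=
      htight.2 b hbSE k hkE k' hk'E hkb hk'B
    exact hnsB (sc_trans hsc hkk')
  · rintro a haSE b hbSE c hcSE ⟨k, hkE, hbA, hkA, hnsA⟩ ⟨k', hk'E, hcB, hk'B, hnsB⟩
    obtain ⟨hkb, hab, hsc_ak⟩ := keyL2 h hbA hkA hnsA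
    have hkk' : SameComp G (gstar G b)ᶜ k k' :=
      htight.2 b hbSE k hkE k' hk'E hkb hk'B
    have hnck : ¬ SameComp G (gstar G b)ᶜ c k := fun hx => hnsB (sc_trans hx hkk')
    have hca : c ∈ (gstar G a)ᶜ := by
      rw [mem_gstar_compl]
      constructor
      · rintro rfl
        exact hnck hsc_ak
      · intro hac
        exact hnck (sc_trans (sc_symm (sc_adj hab hcB hac)) hsc_ak)
    refine ⟨k, hkE, hca, hkA, fun hx => ?_⟩
    exact hnck (sc_symm (keyL3 hbA hnsA hkb c (sc_symm hx)).2)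
end

section
/- Let Γ be a finite simple graph of type II, let S be a finite set of vertices of Γ, and let E ⊆ S be tight in S with E ≠ S. Let u ∈ S \ E be a minimal element of S \ E with respect to the partial order ≤_E (where a <_E b iff there exists k ∈ E with b and k in different components of the complement of St(a)). Then E ∪ {u} is tight in S. -/
open SimpleGraph

variable {V : Type*}

/-- if Γ is of type II, `E ⊆ S` is tight in `S` with `E ≠ S`, and `u ∈ S \ E` is
minimal with respect to `≤_E`, then `E ∪ {u}` is tight in `S`. -/
theorem stmt_6 [Fintype V] (G : SimpleGraph V) (h : TypeII G)
    (S E : Set V) (htight : Tight G S E) (hne : E ≠ S)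
    (u : V) (hu : u ∈ S \ E) (hmin : ∀ a ∈ S \ E, ¬ ltE G E a u) :
    Tight G S (insert u E) := by
  obtain ⟨hES, htE⟩ := htight
  refine ⟨Set.insert_subset hu.1 hES, ?_⟩
  intro w hw a ha b hb haw hbw
  have hwSE : w ∈ S \ E := ⟨hw.1, fun h => hw.2 (Set.mem_insert_iff.mpr (Or.inr h))⟩
  have key : ∀ k ∈ E, k ∉ gstar G w → u ∉ gstar G w → SameComp G (gstar G w)ᶜ u k := by
    intro k hk hkw huw
    by_contra hns
    exact hmin w hwSE ⟨k, hk, huw, hkw, hns⟩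
  rcases Set.mem_insert_iff.mp ha with rfl | haE
  · rcases Set.mem_insert_iff.mp hb with rfl | hbE
    · exact ⟨haw, haw, Reachable.refl _⟩
    · exact key b hbE hbw haw
  · rcases Set.mem_insert_iff.mp hb with rfl | hbE
    · obtain ⟨h1, h2, hr⟩ := key a haE haw hbw
      exact ⟨h2, h1, hr.symm⟩
    · exact htE w hwSE a haE b hbE haw hbw
end

section
/- Let Γ be a finite simple graph such that for all vertices v, w, if lk(w) ⊆ St(v) then v and w are equal or adjacent. Let Q be the vertex set of a maximal clique of Γ, let v ∈ Q, and let w be a vertex of Γ such that lk(v) ⊆ St(w). Then w ∈ Q. -/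
open SimpleGraph

variable {V : Type*}

/-- if `Out(G(Γ))` has no non-adjacent transvections (i.e. `lk(w) ⊆ St(v)` forces
`v = w` or `v ~ w`), `Q` is a maximal clique, `v ∈ Q` and `lk(v) ⊆ St(w)`, then `w ∈ Q`. -/
theorem stmt_8 [Fintype V] (G : SimpleGraph V)
    (hno : ∀ v w : V, G.neighborSet w ⊆ gstar G v → v = w ∨ G.Adj v w)
    (Q : Set V) (hQ : G.IsClique Q)
    (hmax : ∀ Q' : Set V, G.IsClique Q' → Q ⊆ Q' → Q = Q')
    (v : V) (hv : v ∈ Q) (w : V) (hw : G.neighborSet v ⊆ gstar G w) :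
    w ∈ Q := by
  rcases hno w v hw with h | hwv
  · exact h ▸ hv
  · -- key: every u ∈ Q distinct from w is adjacent to w
    have hadj : ∀ u ∈ Q, u ≠ w → G.Adj w u := by
      intro u hu hne
      by_cases huv : u = v
      · exact huv ▸ hwv
      · have : u ∈ G.neighborSet v := hQ hv hu (Ne.symm huv)
        rcases hw this with h | h
        · exact absurd h hne
        · exact h
    have hclique : G.IsClique (insert w Q) := by
      intro a ha b hb hab
      rcases ha with rfl | ha
      · rcases hb with rfl | hb
        · exact absurd rfl hab
        · exact hadj b hb (fun h => hab h.symm)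
      · rcases hb with rfl | hb
        · exact (hadj a ha hab).symm
        · exact hQ ha hb hab
    have := hmax (insert w Q) hclique (Set.subset_insert w Q)
    rw [this]
    exact Set.mem_insert w Q
end

section
/- Let P be a pocset, let U ⊆ P be an ultrafilter, and let A ∈ U be a minimal element of U with respect to the partial order. Then (U \ {A}) ∪ {A^c} is also an ultrafilter of P. -/
/-- An ultrafilter on a pocset (a poset with a complementation `c`): for each pair
`{A, c A}` exactly one element lies in `U`, and `U` is upward closed. -/
def IsPocsetUltrafilter {P : Type*} [PartialOrder P] (c : P → P) (U : Set P) : Prop :=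
  (∀ A : P, Xor' (A ∈ U) (c A ∈ U)) ∧ ∀ A ∈ U, ∀ B : P, A ≤ B → B ∈ U

/-- if `U` is an ultrafilter of a pocset `P` and `A ∈ U` is minimal in `U`,
then `(U \ {A}) ∪ {A^c}` is also an ultrafilter of `P`. -/
theorem stmt_9 {P : Type*} [PartialOrder P] (c : P → P)
    (hinv : ∀ A : P, c (c A) = A)
    (hne : ∀ A : P, A ≠ c A)
    (hincomp : ∀ A : P, ¬ A ≤ c A ∧ ¬ c A ≤ A)
    (hmono : ∀ A B : P, A ≤ B → c B ≤ c A)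
    (U : Set P) (hU : IsPocsetUltrafilter c U)
    (A : P) (hA : A ∈ U) (hmin : ∀ B ∈ U, B ≤ A → B = A) :
    IsPocsetUltrafilter c ((U \ {A}) ∪ {c A}) := by
  obtain ⟨hxor, hup⟩ := hU
  have hcA : c A ∉ U := by
    rcases hxor A with ⟨_, h⟩ | h
    · exact h
    · exact absurd hA h.2
  constructor
  · intro B
    by_cases hBA : B = A
    · subst hBA
      right
      refine ⟨Or.inr rfl, ?_⟩
      rintro (⟨_, hB⟩ | hB)
      · exact hB rfl
      · exact hne B (by simpa using hB)
    · by_cases hBcA : B = c A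
      · subst hBcA
        left
        refine ⟨Or.inr rfl, ?_⟩
        rw [hinv]
        rintro (⟨hB, hBne⟩ | hB)
        · exact hBne rfl
        · exact hne A (by simpa using hB)
      · have hcBA : c B ≠ A := fun h => hBcA (by rw [← h, hinv])
        have hcBcA : c B ≠ c A := fun h => hBA (by
          have := congrArg c h; rwa [hinv, hinv] at this)
        rcases hxor B with ⟨h1, h2⟩ | ⟨h2, h1⟩
        · left
          refine ⟨Or.inl ⟨h1, hBA⟩, ?_⟩
          rintro (⟨h, _⟩ | h)
          · exact h2 h
          · exact hcBcA h
        · right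
          refine ⟨Or.inl ⟨h2, hcBA⟩, ?_⟩
          rintro (⟨h, _⟩ | h)
          · exact h1 h
          · exact hBcA h
  · rintro B (⟨hB, hBA⟩ | hB) D hBD
    · have hD : D ∈ U := hup B hB D hBD
      have hDA : D ≠ A := by
        intro h; subst h
        exact hBA (hmin B hB hBD)
      exact Or.inl ⟨hD, hDA⟩
    · have hB' : B = c A := hB
      subst hB'
      by_cases hD : D ∈ U
      · have hDA : D ≠ A := by
          intro h
          rw [h] at hBD
          exact (hincomp A).2 hBD
        exact Or.inl ⟨hD, hDA⟩
      · have hcD : c D ∈ U := by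
          rcases hxor D with ⟨h1, _⟩ | ⟨h2, _⟩
          · exact absurd h1 hD
          · exact h2
        have : c D ≤ A := by
          have := hmono _ _ hBD
          rwa [hinv] at this
        have hcDA : c D = A := hmin _ hcD this
        have : D = c A := by rw [← hcDA, hinv]
        exact Or.inr this
end

section
/- Let f : ℤ → ℤ be a bijection which is an (L, A)-quasi-isometry, i.e., there exist constants L ≥ 1 and A ≥ 0 such that (1/L)|x − y| − A ≤ |f(x) − f(y)| ≤ L|x − y| + A for all x, y ∈ ℤ. Then f is at bounded distance from an isometry of ℤ: there exist ε ∈ {1, −1}, c ∈ ℤ, and a constant C ≥ 0 such that |f(x) − (εx + c)| ≤ C for all x ∈ ℤ. -/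
private lemma qi_step (f : ℤ → ℤ) (L A : ℝ)
    (hqi : ∀ x y : ℤ,
      (1 / L) * |(x : ℝ) - (y : ℝ)| - A ≤ |(f x : ℝ) - (f y : ℝ)| ∧
      |(f x : ℝ) - (f y : ℝ)| ≤ L * |(x : ℝ) - (y : ℝ)| + A) (z : ℤ) :
    |(f (z+1) : ℝ) - f z| ≤ L + A := by
  have h := (hqi (z+1) z).2
  have e : |((z+1 : ℤ) : ℝ) - (z:ℝ)| = 1 := by push_cast; simp
  rw [e] at h; linarith

private lemma qi_sep (f : ℤ → ℤ) (L A : ℝ) (hL : 1 ≤ L)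
    (hqi : ∀ x y : ℤ,
      (1 / L) * |(x : ℝ) - (y : ℝ)| - A ≤ |(f x : ℝ) - (f y : ℝ)| ∧
      |(f x : ℝ) - (f y : ℝ)| ≤ L * |(x : ℝ) - (y : ℝ)| + A)
    (m x z : ℤ) (hmL : L * ((L + A) + A) < (m:ℝ))
    (h : x + m ≤ z ∨ z ≤ x - m) :
    L + A < |(f z : ℝ) - f x| := by
  have hL0 : (0:ℝ) < L := by linarith
  have h1 := (hqi z x).1
  have hZ : (m:ℤ) ≤ |z - x| := by
    rcases h with h | h
    · exact le_trans (by omega) (le_abs_self _)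
    · exact le_trans (by omega) (neg_le_abs _)
  have habs : (m:ℝ) ≤ |(z:ℝ) - (x:ℝ)| := by
    calc (m:ℝ) ≤ ((|z-x| : ℤ) : ℝ) := by exact_mod_cast hZ
      _ = |(z:ℝ) - (x:ℝ)| := by push_cast; ring_nf
  have h2 : (1/L) * (m:ℝ) ≤ (1/L) * |(z:ℝ) - (x:ℝ)| :=
    mul_le_mul_of_nonneg_left habs (by positivity)
  have h3 : (L + A) + A < (m:ℝ) / L := (lt_div_iff₀ hL0).mpr (by nlinarith)
  have e : (1/L) * (m:ℝ) = (m:ℝ) / L := by ring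
  linarith [h1]

private lemma sign_prop (f : ℤ → ℤ) (L A : ℝ) (hL : 1 ≤ L)
    (hqi : ∀ x y : ℤ,
      (1 / L) * |(x : ℝ) - (y : ℝ)| - A ≤ |(f x : ℝ) - (f y : ℝ)| ∧
      |(f x : ℝ) - (f y : ℝ)| ≤ L * |(x : ℝ) - (y : ℝ)| + A)
    (m x z w : ℤ) (hmL : L * ((L + A) + A) < (m:ℝ))
    (h : x + m ≤ z ∨ z ≤ x - m) (hw : |(f w : ℝ) - f z| ≤ L + A) :
    (f x < f z → f x < f w) ∧ (f z < f x → f w < f x) := by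
  have hsep := qi_sep f L A hL hqi m x z hmL h
  have h3 : (f z : ℝ) - (f w : ℝ) ≤ |(f w : ℝ) - f z| := by
    rw [abs_sub_comm]; exact le_abs_self _
  have h4 : (f w : ℝ) - (f z : ℝ) ≤ |(f w : ℝ) - f z| := le_abs_self _
  constructor
  · intro hlt
    have h1 : (f x:ℝ) < f z := by exact_mod_cast hlt
    have h2 : (f z:ℝ) - f x = |(f z:ℝ) - f x| := (abs_of_pos (by linarith)).symm
    have : (f x:ℝ) < f w := by linarith
    exact_mod_cast this
  · intro hlt
    have h1 : (f z:ℝ) < f x := by exact_mod_cast hlt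
    have h2 : (f x:ℝ) - f z = |(f z:ℝ) - f x| := by
      rw [abs_sub_comm]; exact (abs_of_pos (by linarith)).symm
    have : (f w:ℝ) < f x := by linarith
    exact_mod_cast this

private lemma same_right (f : ℤ → ℤ) (hbij : Function.Bijective f) (L A : ℝ) (hL : 1 ≤ L)
    (hqi : ∀ x y : ℤ,
      (1 / L) * |(x : ℝ) - (y : ℝ)| - A ≤ |(f x : ℝ) - (f y : ℝ)| ∧
      |(f x : ℝ) - (f y : ℝ)| ≤ L * |(x : ℝ) - (y : ℝ)| + A)
    (m : ℤ) (hm1 : 1 ≤ m) (hmL : L * ((L + A) + A) < (m:ℝ))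
    (x : ℤ) : ∀ z, x + m ≤ z → (f x < f z ↔ f x < f (x + m)) := by
  have key : ∀ k : ℕ, (f x < f (x + m + k) ↔ f x < f (x + m)) := by
    intro k
    induction k with
    | zero => simp
    | succ n ih =>
      have hz : x + m ≤ x + m + (n:ℤ) := by omega
      have hw := qi_step f L A hqi (x + m + n)
      have hp := sign_prop f L A hL hqi m x (x + m + n) (x + m + n + 1) hmL (Or.inl hz) hw
      have e : x + m + ((n+1 : ℕ) : ℤ) = x + m + (n:ℤ) + 1 := by push_cast; ring
      rw [e]
      constructor
      · intro h
        rw [← ih]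
        by_contra hne
        have hne2 : f (x + m + (n:ℤ)) ≠ f x := hbij.1.ne (by omega)
        have hlt : f (x + m + (n:ℤ)) < f x := by omega
        have := hp.2 hlt
        omega
      · intro h
        exact hp.1 (ih.mpr h)
  intro z hz
  have e : z = x + m + ((z - x - m).toNat : ℤ) := by omega
  rw [e]; exact key _

private lemma same_left (f : ℤ → ℤ) (hbij : Function.Bijective f) (L A : ℝ) (hL : 1 ≤ L)
    (hqi : ∀ x y : ℤ,
      (1 / L) * |(x : ℝ) - (y : ℝ)| - A ≤ |(f x : ℝ) - (f y : ℝ)| ∧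
      |(f x : ℝ) - (f y : ℝ)| ≤ L * |(x : ℝ) - (y : ℝ)| + A)
    (m : ℤ) (hm1 : 1 ≤ m) (hmL : L * ((L + A) + A) < (m:ℝ))
    (x : ℤ) : ∀ z, z ≤ x - m → (f x < f z ↔ f x < f (x - m)) := by
  have key : ∀ k : ℕ, (f x < f (x - m - k) ↔ f x < f (x - m)) := by
    intro k
    induction k with
    | zero => simp
    | succ n ih =>
      have hz : x - m - (n:ℤ) ≤ x - m := by omega
      have hw : |(f (x - m - (n:ℤ) - 1) : ℝ) - f (x - m - (n:ℤ))| ≤ L + A := by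
        have := qi_step f L A hqi (x - m - (n:ℤ) - 1)
        have e : x - m - (n:ℤ) - 1 + 1 = x - m - (n:ℤ) := by ring
        rw [e] at this
        rw [abs_sub_comm]; exact this
      have hp := sign_prop f L A hL hqi m x (x - m - (n:ℤ)) (x - m - (n:ℤ) - 1) hmL
        (Or.inr hz) hw
      have e : x - m - ((n+1 : ℕ) : ℤ) = x - m - (n:ℤ) - 1 := by push_cast; ring
      rw [e]
      constructor
      · intro h
        rw [← ih]
        by_contra hne
        have hne2 : f (x - m - (n:ℤ)) ≠ f x := hbij.1.ne (by omega)
        have hlt : f (x - m - (n:ℤ)) < f x := by omega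
        have := hp.2 hlt
        omega
      · intro h
        exact hp.1 (ih.mpr h)
  intro z hz
  have e : z = x - m - ((x - m - z).toNat : ℤ) := by omega
  rw [e]; exact key _

private lemma main_pos (f : ℤ → ℤ) (hbij : Function.Bijective f) (L A : ℝ)
    (hL : 1 ≤ L) (hA : 0 ≤ A)
    (hqi : ∀ x y : ℤ,
      (1 / L) * |(x : ℝ) - (y : ℝ)| - A ≤ |(f x : ℝ) - (f y : ℝ)| ∧
      |(f x : ℝ) - (f y : ℝ)| ≤ L * |(x : ℝ) - (y : ℝ)| + A)
    (m : ℤ) (hm1 : 1 ≤ m) (hmL : L * ((L + A) + A) < (m:ℝ))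
    (hpos : ∀ z, m ≤ z → f 0 < f z)
    (hneg : ∀ z, z ≤ -m → f z < f 0) :
    ∃ (c : ℤ) (C : ℝ), 0 ≤ C ∧ ∀ x : ℤ, |(f x : ℝ) - ((x:ℝ) + (c:ℝ))| ≤ C := by
  have hL0 : (0:ℝ) < L := by linarith
  -- growth at +∞
  have growth : ∀ z : ℤ, m ≤ z → (f 0 : ℝ) + ((z:ℝ)/L - A) ≤ f z := by
    intro z hz
    have h1 := (hqi z 0).1
    have hzpos : (0:ℝ) < (z:ℝ) := by exact_mod_cast (by omega : (0:ℤ) < z)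
    have habs : |(z:ℝ) - ((0:ℤ):ℝ)| = (z:ℝ) := by
      push_cast; rw [sub_zero]; exact abs_of_pos hzpos
    have h2 : (f 0:ℝ) < f z := by exact_mod_cast hpos z hz
    have h3 : |(f z:ℝ) - f 0| = (f z:ℝ) - f 0 := abs_of_pos (by linarith)
    rw [habs, h3] at h1
    have e : (1/L) * (z:ℝ) = (z:ℝ)/L := by ring
    linarith
  -- decay at -∞
  have decay : ∀ z : ℤ, z ≤ -m → (f z : ℝ) ≤ (f 0:ℝ) - (((-z:ℤ):ℝ)/L - A) := by
    intro z hz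
    have h1 := (hqi z 0).1
    have hzneg : (z:ℝ) < 0 := by exact_mod_cast (by omega : z < (0:ℤ))
    have habs : |(z:ℝ) - ((0:ℤ):ℝ)| = ((-z:ℤ):ℝ) := by
      push_cast; rw [sub_zero]; exact abs_of_neg hzneg
    have h2 : (f z:ℝ) < f 0 := by exact_mod_cast hneg z hz
    have h3 : |(f z:ℝ) - f 0| = (f 0:ℝ) - f z := by
      rw [abs_sub_comm]; exact abs_of_pos (by linarith)
    rw [habs, h3] at h1
    have e : (1/L) * ((-z:ℤ):ℝ) = ((-z:ℤ):ℝ)/L := by ring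
    linarith
  -- f x < f z for all z ≥ x + m
  have allpos : ∀ x z : ℤ, x + m ≤ z → f x < f z := by
    intro x z hz
    rw [same_right f hbij L A hL hqi m hm1 hmL x z hz]
    obtain ⟨n, hn⟩ := exists_nat_gt (L * (A + (f x : ℝ) - f 0))
    set N : ℤ := max (x + m) (max m (n:ℤ)) with hN
    have hN1 : x + m ≤ N := le_max_left _ _
    have hN2 : m ≤ N := le_trans (le_max_left _ _) (le_max_right _ _)
    have hN3 : (n:ℤ) ≤ N := le_trans (le_max_right _ _) (le_max_right _ _)
    have hfN : f x < f N := by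
      have hg := growth N hN2
      have hnN : ((n:ℤ):ℝ) ≤ (N:ℝ) := by exact_mod_cast hN3
      have h4 : (A + (f x:ℝ) - f 0) < (N:ℝ)/L := by
        rw [lt_div_iff₀ hL0]; push_cast at hnN ⊢; nlinarith
      have : (f x:ℝ) < f N := by linarith
      exact_mod_cast this
    exact (same_right f hbij L A hL hqi m hm1 hmL x N hN1).mp hfN
  -- f z < f x for all z ≤ x - m
  have allneg : ∀ x z : ℤ, z ≤ x - m → f z < f x := by
    intro x z hz
    have key : f x < f z ↔ f x < f (x - m) :=
      same_left f hbij L A hL hqi m hm1 hmL x z hz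
    obtain ⟨n, hn⟩ := exists_nat_gt (L * (A + (f 0 : ℝ) - f x))
    set N : ℤ := min (x - m) (min (-m) (-(n:ℤ))) with hN
    have hN1 : N ≤ x - m := min_le_left _ _
    have hN2 : N ≤ -m := le_trans (min_le_right _ _) (min_le_left _ _)
    have hN3 : N ≤ -(n:ℤ) := le_trans (min_le_right _ _) (min_le_right _ _)
    have hfN : f N < f x := by
      have hg := decay N hN2
      have hnN : ((n:ℤ):ℝ) ≤ ((-N:ℤ):ℝ) := by exact_mod_cast (by omega : (n:ℤ) ≤ -N)
      have h4 : (A + (f 0:ℝ) - f x) < ((-N:ℤ):ℝ)/L := by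
        rw [lt_div_iff₀ hL0]; push_cast at hnN ⊢; nlinarith
      have : (f N:ℝ) < f x := by linarith
      exact_mod_cast this
    have hne : f z ≠ f x := hbij.1.ne (by omega)
    have h5 : ¬ (f x < f N) := by omega
    have h6 : ¬ (f x < f (x - m)) :=
      fun h => h5 ((same_left f hbij L A hL hqi m hm1 hmL x N hN1).mpr h)
    have h7 : ¬ (f x < f z) := fun h => h6 (key.mp h)
    omega
  -- coarse monotonicity constant
  obtain ⟨w, hw⟩ := exists_nat_gt (L * (m:ℝ) + A)
  set W : ℤ := (w:ℤ) with hWdef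
  have hW0 : (0:ℤ) ≤ W := Int.natCast_nonneg w
  have bound_small : ∀ x y : ℤ, x ≤ y → y - x < m → |(f y : ℝ) - f x| ≤ (W:ℝ) := by
    intro x y hxy hsm
    have h2 := (hqi y x).2
    have habs : |(y:ℝ) - (x:ℝ)| ≤ (m:ℝ) := by
      have : |(y:ℝ) - (x:ℝ)| = ((y - x : ℤ):ℝ) := by
        push_cast
        exact abs_of_nonneg (by exact_mod_cast (by omega : (0:ℤ) ≤ y - x))
      rw [this]; exact_mod_cast (by omega : y - x ≤ m)
    have hWw : L * (m:ℝ) + A ≤ (W:ℝ) := by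
      rw [hWdef]; push_cast; linarith
    have : L * |(y:ℝ) - (x:ℝ)| ≤ L * (m:ℝ) := mul_le_mul_of_nonneg_left habs (by linarith)
    linarith
  have monoU : ∀ x y : ℤ, x ≤ y → f x - W ≤ f y := by
    intro x y h
    by_cases hc : x + m ≤ y
    · have := allpos x y hc; omega
    · have hb := bound_small x y h (by omega)
      have : (f x:ℝ) - f y ≤ |(f y:ℝ) - f x| := by rw [abs_sub_comm]; exact le_abs_self _
      have : ((f x - f y : ℤ):ℝ) ≤ (W:ℝ) := by push_cast; linarith
      have : f x - f y ≤ W := by exact_mod_cast this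
      omega
  have monoD : ∀ x y : ℤ, y ≤ x → f y ≤ f x + W := by
    intro x y h
    by_cases hc : y ≤ x - m
    · have := allneg x y hc; omega
    · have hb := bound_small y x h (by omega)
      have : (f y:ℝ) - f x ≤ |(f x:ℝ) - f y| := by rw [abs_sub_comm]; exact le_abs_self _
      have : ((f y - f x : ℤ):ℝ) ≤ (W:ℝ) := by push_cast; linarith
      have : f y - f x ≤ W := by exact_mod_cast this
      omega
  -- counting
  obtain ⟨g, hg1, hg2⟩ := Function.bijective_iff_has_inverse.mp hbij
  have count : ∀ x y : ℤ, x < y →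
      y - x - 2*W ≤ f y - f x ∧ f y - f x ≤ y - x + 2*W := by
    intro x y hxy
    constructor
    · have hsub : ∀ z ∈ Finset.Icc x y, f z ∈ Finset.Icc (f x - W) (f y + W) := by
        intro z hz
        rw [Finset.mem_Icc] at hz ⊢
        exact ⟨monoU x z hz.1, by have := monoD y z hz.2; omega⟩
      have hcard := Finset.card_le_card_of_injOn f hsub
        (hbij.1.injOn)
      rw [Int.card_Icc, Int.card_Icc] at hcard
      omega
    · have hsub : ∀ t ∈ Finset.Icc (f x + W + 1) (f y - W - 1), g t ∈ Finset.Icc (x+1) (y-1) := by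
        intro t ht
        rw [Finset.mem_Icc] at ht ⊢
        have hfz : f (g t) = t := hg2 t
        constructor
        · by_contra hcon
          have : g t ≤ x := by omega
          have := monoD x (g t) this
          omega
        · by_contra hcon
          have : y ≤ g t := by omega
          have := monoU y (g t) this
          omega
      have hginj : Set.InjOn g (Finset.Icc (f x + W + 1) (f y - W - 1)) := by
        intro a _ b _ hab
        have : f (g a) = f (g b) := by rw [hab]
        rwa [hg2, hg2] at this
      have hcard := Finset.card_le_card_of_injOn g hsub hginj
      rw [Int.card_Icc, Int.card_Icc] at hcard
      omega
  -- conclusion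
  refine ⟨f 0, 2*(W:ℝ), by positivity, ?_⟩
  intro x
  have hineq : -(2*W) ≤ f x - x - f 0 ∧ f x - x - f 0 ≤ 2*W := by
    rcases lt_trichotomy x 0 with h | h | h
    · have := count x 0 h; omega
    · subst h; simp; omega
    · have := count 0 x h; omega
  rw [abs_le]
  constructor
  · have : ((-(2*W) : ℤ):ℝ) ≤ ((f x - x - f 0 : ℤ):ℝ) := by exact_mod_cast hineq.1
    push_cast at this; linarith
  · have : ((f x - x - f 0 : ℤ):ℝ) ≤ ((2*W : ℤ):ℝ) := by exact_mod_cast hineq.2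
    push_cast at this; linarith

private lemma qi_neg (f : ℤ → ℤ) (L A : ℝ)
    (hqi : ∀ x y : ℤ,
      (1 / L) * |(x : ℝ) - (y : ℝ)| - A ≤ |(f x : ℝ) - (f y : ℝ)| ∧
      |(f x : ℝ) - (f y : ℝ)| ≤ L * |(x : ℝ) - (y : ℝ)| + A) :
    ∀ x y : ℤ,
      (1 / L) * |(x : ℝ) - (y : ℝ)| - A ≤ |((-(f x) : ℤ) : ℝ) - ((-(f y) : ℤ) : ℝ)| ∧
      |((-(f x) : ℤ) : ℝ) - ((-(f y) : ℤ) : ℝ)| ≤ L * |(x : ℝ) - (y : ℝ)| + A := by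
  intro x y
  have e : |((-(f x) : ℤ) : ℝ) - ((-(f y) : ℤ) : ℝ)| = |(f x : ℝ) - (f y : ℝ)| := by
    push_cast
    rw [show -(f x : ℝ) - -(f y : ℝ) = -((f x : ℝ) - (f y : ℝ)) by ring, abs_neg]
  rw [e]; exact hqi x y

private lemma no_both (f : ℤ → ℤ) (hbij : Function.Bijective f) (L A : ℝ)
    (hL : 1 ≤ L) (hA : 0 ≤ A)
    (hqi : ∀ x y : ℤ,
      (1 / L) * |(x : ℝ) - (y : ℝ)| - A ≤ |(f x : ℝ) - (f y : ℝ)| ∧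
      |(f x : ℝ) - (f y : ℝ)| ≤ L * |(x : ℝ) - (y : ℝ)| + A)
    (m : ℤ) (hm1 : 1 ≤ m) (M : ℤ) (hM : L * (m:ℝ) + A < (M:ℝ))
    (hall : ∀ z : ℤ, (m ≤ z ∨ z ≤ -m) → f 0 < f z) : False := by
  have hL0 : (0:ℝ) < L := by linarith
  have hM0 : (0:ℤ) < M := by
    have h1 : (1:ℝ) ≤ L * (m:ℝ) := by
      have : (1:ℝ) ≤ (m:ℝ) := by exact_mod_cast hm1
      nlinarith
    have h2 : (1:ℝ) < (M:ℝ) := by linarith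
    have : (1:ℤ) < M := by exact_mod_cast h2
    omega
  obtain ⟨g, hg1, hg2⟩ := Function.bijective_iff_has_inverse.mp hbij
  set z : ℤ := g (f 0 - (M+1)) with hz
  have hfz : f z = f 0 - (M+1) := hg2 _
  have h1 : ¬ (m ≤ z ∨ z ≤ -m) := by
    intro h
    have := hall z h
    omega
  push_neg at h1
  have habs : |(z:ℝ) - ((0:ℤ):ℝ)| ≤ (m:ℝ) := by
    have hZ : |z| ≤ m := by
      rw [abs_le]; omega
    have : |(z:ℝ)| = ((|z| : ℤ):ℝ) := by push_cast; ring_nf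
    push_cast
    rw [sub_zero, this]
    exact_mod_cast hZ
  have h2 := (hqi z 0).2
  have h3 : L * |(z:ℝ) - ((0:ℤ):ℝ)| ≤ L * (m:ℝ) := mul_le_mul_of_nonneg_left habs (by linarith)
  have h4 : |(f z : ℝ) - f 0| = (M:ℝ) + 1 := by
    have : (f z : ℝ) - f 0 = -((M:ℝ)+1) := by
      have hq : f z - f 0 = -(M+1) := by omega
      have : ((f z - f 0 : ℤ):ℝ) = ((-(M+1) : ℤ):ℝ) := by rw [hq]
      push_cast at this; linarith
    rw [this, abs_neg]
    exact abs_of_pos (by push_cast; exact_mod_cast (by omega : (0:ℤ) < M + 1))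
  rw [h4] at h2
  linarith

/-- a bijective `(L, A)`-quasi-isometry `f : ℤ → ℤ` is at bounded distance
from an isometry `x ↦ εx + c` with `ε ∈ {1, -1}`. -/
theorem stmt_11 (f : ℤ → ℤ) (hbij : Function.Bijective f)
    (L A : ℝ) (hL : 1 ≤ L) (hA : 0 ≤ A)
    (hqi : ∀ x y : ℤ,
      (1 / L) * |(x : ℝ) - (y : ℝ)| - A ≤ |(f x : ℝ) - (f y : ℝ)| ∧
      |(f x : ℝ) - (f y : ℝ)| ≤ L * |(x : ℝ) - (y : ℝ)| + A) :
    ∃ (ε c : ℤ) (C : ℝ), (ε = 1 ∨ ε = -1) ∧ 0 ≤ C ∧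
      ∀ x : ℤ, |(f x : ℝ) - ((ε : ℝ) * (x : ℝ) + (c : ℝ))| ≤ C := by
  obtain ⟨mn, hmn⟩ := exists_nat_gt (L * ((L + A) + A))
  set m : ℤ := (mn:ℤ) + 1 with hmdef
  have hmn0 : (0:ℤ) ≤ (mn:ℤ) := Int.natCast_nonneg mn
  have hm1 : 1 ≤ m := by omega
  have hmL : L * ((L + A) + A) < (m:ℝ) := by
    rw [hmdef]; push_cast; linarith
  obtain ⟨Mn, hMn⟩ := exists_nat_gt (L * (m:ℝ) + A)
  set M : ℤ := (Mn:ℤ) with hMdef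
  have hM : L * (m:ℝ) + A < (M:ℝ) := by rw [hMdef]; exact_mod_cast hMn
  have hne1 : f m ≠ f 0 := hbij.1.ne (by omega)
  have hne2 : f (-m) ≠ f 0 := hbij.1.ne (by omega)
  have SR := same_right f hbij L A hL hqi m hm1 hmL 0
  have SL := same_left f hbij L A hL hqi m hm1 hmL 0
  simp only [zero_add, zero_sub] at SR SL
  -- the negated map
  have hbij' : Function.Bijective (fun z => -(f z)) := by
    constructor
    · intro a b h
      simp only [neg_inj] at h
      exact hbij.1 h
    · intro y
      obtain ⟨x, hx⟩ := hbij.2 (-y)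
      exact ⟨x, by simp [hx]⟩
  have hqi' := qi_neg f L A hqi
  rcases lt_or_gt_of_ne hne1 with hr | hr <;> rcases lt_or_gt_of_ne hne2 with hl | hl
  · -- f m < f 0, f (-m) < f 0 : impossible
    exfalso
    refine no_both (fun z => -(f z)) hbij' L A hL hA hqi' m hm1 M hM ?_
    intro z hz
    have hnez : f z ≠ f 0 := hbij.1.ne (by omega)
    have hflt : f z < f 0 := by
      rcases hz with hz | hz
      · have := SR z (by omega)
        omega
      · have := SL z (by omega)
        omega
    simpa using hflt
  · -- f m < f 0, f 0 < f (-m) : decreasing type, use -f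
    have hpos' : ∀ z, m ≤ z → (fun z => -(f z)) 0 < (fun z => -(f z)) z := by
      intro z hz
      have hnez : f z ≠ f 0 := hbij.1.ne (by omega)
      have := SR z (by omega)
      simp only []
      omega
    have hneg' : ∀ z, z ≤ -m → (fun z => -(f z)) z < (fun z => -(f z)) 0 := by
      intro z hz
      have := (SL z (by omega)).mpr hl
      simp only []
      omega
    obtain ⟨c, C, hC, hb⟩ := main_pos (fun z => -(f z)) hbij' L A hL hA hqi' m hm1 hmL hpos' hneg'
    refine ⟨-1, -c, C, Or.inr rfl, hC, ?_⟩
    intro x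
    have h := hb x
    rw [show ((-(f x) : ℤ):ℝ) - ((x:ℝ) + (c:ℝ)) = -((f x:ℝ) + x + c) by push_cast; ring,
      abs_neg] at h
    rw [show (f x:ℝ) - (((-1:ℤ):ℝ) * (x:ℝ) + ((-c:ℤ):ℝ)) = (f x:ℝ) + x + c by push_cast; ring]
    exact h
  · -- f 0 < f m, f (-m) < f 0 : increasing type
    have hpos : ∀ z, m ≤ z → f 0 < f z := by
      intro z hz
      exact (SR z (by omega)).mpr hr
    have hneg : ∀ z, z ≤ -m → f z < f 0 := by
      intro z hz
      have hnez : f z ≠ f 0 := hbij.1.ne (by omega)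
      have := SL z (by omega)
      omega
    obtain ⟨c, C, hC, hb⟩ := main_pos f hbij L A hL hA hqi m hm1 hmL hpos hneg
    refine ⟨1, c, C, Or.inl rfl, hC, ?_⟩
    intro x
    rw [show (((1:ℤ):ℝ) * (x:ℝ) + (c:ℝ)) = (x:ℝ) + c by push_cast; ring]
    exact hb x
  · -- f 0 < f m, f 0 < f (-m) : impossible
    exfalso
    refine no_both f hbij L A hL hA hqi m hm1 M hM ?_
    intro z hz
    rcases hz with hz | hz
    · exact (SR z (by omega)).mpr hr
    · exact (SL z (by omega)).mpr hl
end

section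
/- Fix m ≥ 1 and equip ℤ^m with the ℓ^∞ metric. Let p₁, p₂ : ℤ^m → ℤ^m be surjective (L, A)-quasi-isometries such that d(p₁(x), p₂(x)) ≤ A for all x ∈ ℤ^m, and suppose there are positive integers r₁, r₂ such that every fiber of p₁ has exactly r₁ elements and every fiber of p₂ has exactly r₂ elements. Then r₁ = r₂. -/
/-!
Count preimages of large cubes. If every fiber of `p` has `r` points, the preimage of a cube
with `n^m` points has `r * n^m` points. Since `p₁` and `p₂` are uniformly close, the
`p₁`-preimage of a cube lies in the `p₂`-preimage of the cube thickened by a constant `c`, so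
`r₁ * n^m ≤ r₂ * (n + 2c)^m` for all `n`; letting `n → ∞` gives `r₁ ≤ r₂`, and symmetrically.
-/

open Filter Topology

def dinf {m : ℕ} (x y : Fin m → ℤ) : ℕ :=
  Finset.univ.sup fun i => (x i - y i).natAbs

lemma le_of_forall_mul_pow_le_mul_add_pow {m k a b : ℕ}
    (h : ∀ n : ℕ, a * n ^ m ≤ b * (n + k) ^ m) : a ≤ b := by
  have key : ∀ n : ℕ, 1 ≤ n → (a : ℝ) * ((n : ℝ) / (n + k)) ^ m ≤ b := by
    intro n hn
    rw [div_pow, ← mul_div_assoc, div_le_iff₀ (by positivity)]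
    exact_mod_cast h n
  have lim : Tendsto (fun n : ℕ => (a : ℝ) * ((n : ℝ) / (n + k)) ^ m) atTop (𝓝 a) := by
    simpa using ((tendsto_natCast_div_add_atTop (k : ℝ)).pow m).const_mul (a : ℝ)
  exact_mod_cast le_of_tendsto lim (eventually_atTop.2 ⟨1, key⟩)

section Fibers

variable {α β : Type*} {p : α → β} {r : ℕ}

lemma finite_preimage_of_ncard_fiber_eq (hr : 0 < r) (hp : ∀ y, (p ⁻¹' {y}).ncard = r)
    {s : Set β} (hs : s.Finite) : (p ⁻¹' s).Finite :=
  hs.preimage' fun y _ => Set.finite_of_ncard_pos (hp y ▸ hr)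

lemma ncard_preimage_finset_of_ncard_fiber_eq {B : Finset β}
    (hp : ∀ y ∈ B, (p ⁻¹' {y}).ncard = r) (hB : (p ⁻¹' B).Finite) :
    (p ⁻¹' B).ncard = r * B.card := by
  classical
  rw [Set.ncard_eq_toFinset_card _ hB,
    Finset.card_eq_sum_card_fiberwise (f := p) (t := B) fun x hx => by simpa using hx]
  have fiber : ∀ y ∈ B, {x ∈ hB.toFinset | p x = y}.card = r := by
    intro y hy
    rw [← hp y hy, ← Set.ncard_coe_finset]
    congr 1
    ext x
    simp +contextual [hy]
  rw [Finset.sum_congr rfl fiber, Finset.sum_const, smul_eq_mul, mul_comm]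

end Fibers

section Cubes

variable {m : ℕ}

noncomputable def cube (m : ℕ) (a b : ℤ) : Finset (Fin m → ℤ) :=
  Fintype.piFinset fun _ => Finset.Ico a b

lemma card_cube (a b : ℤ) : (cube m a b).card = (b - a).toNat ^ m := by
  simp [cube, Int.card_Ico]

lemma natAbs_sub_le_dinf (x y : Fin m → ℤ) (i : Fin m) : (x i - y i).natAbs ≤ dinf x y :=
  Finset.le_sup (f := fun i => (x i - y i).natAbs) (Finset.mem_univ i)

lemma dinf_comm (x y : Fin m → ℤ) : dinf x y = dinf y x := by
  simp only [dinf, ← Int.natAbs_neg (x _ - y _), neg_sub]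

lemma mem_cube_of_dinf_le {a b : ℤ} {c : ℕ} {y z : Fin m → ℤ} (hy : y ∈ cube m a b)
    (hyz : dinf y z ≤ c) : z ∈ cube m (a - c) (b + c) := by
  simp only [cube, Fintype.mem_piFinset, Finset.mem_Ico] at hy ⊢
  intro i
  have := natAbs_sub_le_dinf y z i
  have := hy i
  omega

end Cubes

theorem fiber_ncard_le_of_dinf_le {α : Type*} {m c rp rq : ℕ} {p q : α → (Fin m → ℤ)}
    (hrq : 0 < rq) (hp : ∀ y, (p ⁻¹' {y}).ncard = rp) (hq : ∀ y, (q ⁻¹' {y}).ncard = rq)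
    (hpq : ∀ x, dinf (p x) (q x) ≤ c) : rp ≤ rq := by
  refine le_of_forall_mul_pow_le_mul_add_pow (m := m) (k := 2 * c) fun n => ?_
  have hsub : p ⁻¹' cube m 0 n ⊆ q ⁻¹' cube m (-c) (n + c) := fun x hx => by
    simpa using mem_cube_of_dinf_le hx (hpq x)
  have hfin : (q ⁻¹' cube m (-c) (n + c)).Finite :=
    finite_preimage_of_ncard_fiber_eq hrq hq (Finset.finite_toSet _)
  calc rp * n ^ m = (p ⁻¹' cube m 0 n).ncard := by
        rw [ncard_preimage_finset_of_ncard_fiber_eq (fun y _ => hp y) (hfin.subset hsub),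
          card_cube]
        simp
    _ ≤ (q ⁻¹' cube m (-c) (n + c)).ncard := Set.ncard_le_ncard hsub hfin
    _ = rq * (n + 2 * c) ^ m := by
        rw [ncard_preimage_finset_of_ncard_fiber_eq (fun y _ => hq y) hfin, card_cube]
        congr 2
        omega

theorem stmt_12_general (m : ℕ) (A : ℝ)
    (p₁ p₂ : (Fin m → ℤ) → (Fin m → ℤ))
    (hclose : ∀ x : Fin m → ℤ, (dinf (p₁ x) (p₂ x) : ℝ) ≤ A)
    (r₁ r₂ : ℕ) (hr₁ : 0 < r₁) (hr₂ : 0 < r₂)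
    (hf₁ : ∀ y : Fin m → ℤ, (p₁ ⁻¹' {y}).ncard = r₁)
    (hf₂ : ∀ y : Fin m → ℤ, (p₂ ⁻¹' {y}).ncard = r₂) :
    r₁ = r₂ := by
  have h₁₂ : ∀ x, dinf (p₁ x) (p₂ x) ≤ ⌈A⌉₊ := fun x => by
    exact_mod_cast (hclose x).trans (Nat.le_ceil A)
  have h₂₁ : ∀ x, dinf (p₂ x) (p₁ x) ≤ ⌈A⌉₊ := fun x => dinf_comm (p₁ x) (p₂ x) ▸ h₁₂ x
  exact le_antisymm (fiber_ncard_le_of_dinf_le hr₂ hf₁ hf₂ h₁₂)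
    (fiber_ncard_le_of_dinf_le hr₁ hf₂ hf₁ h₂₁)

/-- if `p₁, p₂ : ℤ^m → ℤ^m` are surjective `(L, A)`-quasi-isometries at
distance at most `A` from each other, whose fibers all have exactly `r₁` (resp. `r₂`)
elements, then `r₁ = r₂`. -/
theorem stmt_12 (m : ℕ) (hm : 1 ≤ m) (L A : ℝ) (hL : 1 ≤ L) (hA : 0 ≤ A)
    (p₁ p₂ : (Fin m → ℤ) → (Fin m → ℤ))
    (hs₁ : Function.Surjective p₁) (hs₂ : Function.Surjective p₂)
    (hq₁ : ∀ x y : Fin m → ℤ,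
      (1 / L) * (dinf x y : ℝ) - A ≤ (dinf (p₁ x) (p₁ y) : ℝ) ∧
      (dinf (p₁ x) (p₁ y) : ℝ) ≤ L * (dinf x y : ℝ) + A)
    (hq₂ : ∀ x y : Fin m → ℤ,
      (1 / L) * (dinf x y : ℝ) - A ≤ (dinf (p₂ x) (p₂ y) : ℝ) ∧
      (dinf (p₂ x) (p₂ y) : ℝ) ≤ L * (dinf x y : ℝ) + A)
    (hclose : ∀ x : Fin m → ℤ, (dinf (p₁ x) (p₂ x) : ℝ) ≤ A)
    (r₁ r₂ : ℕ) (hr₁ : 0 < r₁) (hr₂ : 0 < r₂)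
    (hf₁ : ∀ y : Fin m → ℤ, (p₁ ⁻¹' {y}).ncard = r₁)
    (hf₂ : ∀ y : Fin m → ℤ, (p₂ ⁻¹' {y}).ncard = r₂) :
    r₁ = r₂ :=
  stmt_12_general m A p₁ p₂ hclose r₁ r₂ hr₁ hr₂ hf₁ hf₂
end

section
/- Let Γ₁ and Γ₂ be finite nonempty simple graphs and let Γ = Γ₁ ∘ Γ₂ be their join. Then Γ is of weak type II if and only if both Γ₁ and Γ₂ are of weak type II. -/
open SimpleGraph

variable {V : Type*}

/-- The join of two simple graphs: keep all edges of each factor and add all edges between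
the two factors. -/
def joinGraph {V W : Type*} (G : SimpleGraph V) (H : SimpleGraph W) :
    SimpleGraph (V ⊕ W) where
  Adj x y :=
    match x, y with
    | Sum.inl a, Sum.inl b => G.Adj a b
    | Sum.inr a, Sum.inr b => H.Adj a b
    | Sum.inl _, Sum.inr _ => True
    | Sum.inr _, Sum.inl _ => True
  symm := by
    constructor
    rintro (a | a) (b | b) h
    · exact G.adj_symm h
    · trivial
    · trivial
    · exact H.adj_symm h
  loopless := by
    constructor
    rintro (a | a) h
    · exact G.irrefl h
    · exact H.irrefl h

/-!
Distinct non-adjacent vertices are at distance 2 exactly when they have a common neighbour, and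
when they have none the complement of their common neighbourhood is everything. So a nonempty graph
is of weak type II iff the common-neighbourhood complement of every non-adjacent pair `a, b` induces
a connected graph; connectivity of the graph itself follows because `a` and `b` lie in that
complement. In the join, non-adjacent pairs lie in one factor, and their common neighbourhood is
their common neighbourhood in that factor together with all of the other factor, so its complement
is the complement taken inside the factor.
-/

namespace SimpleGraph

variable {V : Type*} {G : SimpleGraph V} {u v : V}

lemma dist_eq_two_iff :
    G.dist u v = 2 ↔ u ≠ v ∧ ¬G.Adj u v ∧ (G.commonNeighbors u v).Nonempty := by
  rw [← edist_eq_two_iff]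
  refine ⟨fun h => ?_, fun h => by simp [dist, h]⟩
  rw [← (Reachable.of_dist_ne_zero (by omega)).coe_dist_eq_edist, h]
  rfl

lemma reachable_of_connected_induce_compl_commonNeighbors
    (h : (G.induce (G.commonNeighbors u v)ᶜ).Connected) : G.Reachable u v :=
  (h.preconnected ⟨u, G.notMem_commonNeighbors_left u v⟩
    ⟨v, G.notMem_commonNeighbors_right u v⟩).map (Embedding.induce _).toHom

lemma weakTypeII_iff [Nonempty V] :
    WeakTypeII G ↔
      ∀ a b, a ≠ b → ¬G.Adj a b → (G.induce (G.commonNeighbors a b)ᶜ).Connected := by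
  constructor
  · rintro ⟨hconn, hdist⟩ a b hne hadj
    by_cases hcommon : (G.commonNeighbors a b).Nonempty
    · exact hdist a b (dist_eq_two_iff.2 ⟨hne, hadj, hcommon⟩)
    · rw [Set.not_nonempty_iff_eq_empty.1 hcommon, Set.compl_empty]
      exact (induceUnivIso G).connected_iff.2 hconn
  · intro h
    refine ⟨(connected_iff G).2 ⟨fun a b => ?_, ‹_›⟩, fun a b hdist => ?_⟩
    · by_cases hne : a = b
      · exact hne ▸ Reachable.refl a
      by_cases hadj : G.Adj a b
      · exact hadj.reachable
      exact reachable_of_connected_induce_compl_commonNeighbors (h a b hne hadj)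
    · obtain ⟨hne, hadj, -⟩ := dist_eq_two_iff.1 hdist
      exact h a b hne hadj

noncomputable def Embedding.induceImageIso {V' : Type*} {G' : SimpleGraph V'} (f : G ↪g G')
    (s : Set V) : G.induce s ≃g G'.induce (f '' s) where
  toEquiv := Equiv.Set.image f s f.injective
  map_rel_iff' := f.map_adj_iff

end SimpleGraph

namespace joinGraph

variable {V W : Type*} {G : SimpleGraph V} {H : SimpleGraph W}

@[simp] lemma adj_inl_inl {a b : V} : (joinGraph G H).Adj (.inl a) (.inl b) ↔ G.Adj a b := .rfl
@[simp] lemma adj_inr_inr {a b : W} : (joinGraph G H).Adj (.inr a) (.inr b) ↔ H.Adj a b := .rfl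
@[simp] lemma adj_inl_inr {a : V} {b : W} : (joinGraph G H).Adj (.inl a) (.inr b) := trivial
@[simp] lemma adj_inr_inl {a : W} {b : V} : (joinGraph G H).Adj (.inr a) (.inl b) := trivial

def embeddingInl : G ↪g joinGraph G H := ⟨Function.Embedding.inl, .rfl⟩

def embeddingInr : H ↪g joinGraph G H := ⟨Function.Embedding.inr, .rfl⟩

lemma compl_commonNeighbors_inl (a b : V) :
    ((joinGraph G H).commonNeighbors (.inl a) (.inl b))ᶜ = .inl '' (G.commonNeighbors a b)ᶜ := by
  ext (c | c) <;> simp [mem_commonNeighbors]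

lemma compl_commonNeighbors_inr (a b : W) :
    ((joinGraph G H).commonNeighbors (.inr a) (.inr b))ᶜ = .inr '' (H.commonNeighbors a b)ᶜ := by
  ext (c | c) <;> simp [mem_commonNeighbors]

lemma connected_induce_compl_commonNeighbors_inl_iff {a b : V} :
    ((joinGraph G H).induce ((joinGraph G H).commonNeighbors (.inl a) (.inl b))ᶜ).Connected ↔
      (G.induce (G.commonNeighbors a b)ᶜ).Connected := by
  rw [compl_commonNeighbors_inl]
  exact (embeddingInl.induceImageIso _).connected_iff.symm

lemma connected_induce_compl_commonNeighbors_inr_iff {a b : W} :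
    ((joinGraph G H).induce ((joinGraph G H).commonNeighbors (.inr a) (.inr b))ᶜ).Connected ↔
      (H.induce (H.commonNeighbors a b)ᶜ).Connected := by
  rw [compl_commonNeighbors_inr]
  exact (embeddingInr.induceImageIso _).connected_iff.symm

end joinGraph

open joinGraph in
theorem stmt_13_general {V W : Type*} [Nonempty V] [Nonempty W]
    (G : SimpleGraph V) (H : SimpleGraph W) :
    WeakTypeII (joinGraph G H) ↔ WeakTypeII G ∧ WeakTypeII H := by
  simp only [weakTypeII_iff]
  constructor
  · intro h
    exact ⟨fun a b hne hadj => connected_induce_compl_commonNeighbors_inl_iff.1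
        (h (.inl a) (.inl b) (Sum.inl_injective.ne hne) hadj),
      fun a b hne hadj => connected_induce_compl_commonNeighbors_inr_iff.1
        (h (.inr a) (.inr b) (Sum.inr_injective.ne hne) hadj)⟩
  · rintro ⟨hG, hH⟩ (a | a) (b | b) hne hadj
    · exact connected_induce_compl_commonNeighbors_inl_iff.2
        (hG a b (hne <| congrArg _ ·) hadj)
    · exact absurd adj_inl_inr hadj
    · exact absurd adj_inr_inl hadj
    · exact connected_induce_compl_commonNeighbors_inr_iff.2
        (hH a b (hne <| congrArg _ ·) hadj)

/-- the join `Γ₁ ∘ Γ₂` of two finite nonempty graphs is of weak type II iff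
both `Γ₁` and `Γ₂` are of weak type II. -/
theorem stmt_13 {V W : Type*} [Fintype V] [Fintype W] [Nonempty V] [Nonempty W]
    (G : SimpleGraph V) (H : SimpleGraph W) :
    WeakTypeII (joinGraph G H) ↔ WeakTypeII G ∧ WeakTypeII H :=
  stmt_13_general G H
end

section
/- Let Γ be a finite simple graph of type II. Let H(Γ) be the set of pairs (v, H) where v is a vertex of Γ and H is a v-halfspace, with involution (v, H) ↦ (v, H^c) where H^c = St(v) ∪ (complement of H among vertices). Define (v₁, H₁) ≤ (v₂, H₂) if and only if v₁ and v₂ are not adjacent and H₁ ⊆ H₂ (with (v,H) ≤ (v,H) always). Then: (a) ≤ is a partial order on H(Γ) (in particular antisymmetric and transitive); (b) (v₁, H₁) ≤ (v₂, H₂) implies (v₂, H₂^c) ≤ (v₁, H₁^c); (c) for every (v, H), the elements (v, H) and (v, H^c) are distinct and incomparable. Hence H(Γ) with this order and involution is a pocset. -/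
open SimpleGraph

variable {V : Type*}

/-- `H` is a `v`-halfspace: `H = St(v) ∪ A` where `A` is a nonempty union of connected
components of the complement of `St(v)`, and some component is not contained in `A`. -/
def IsHalfspace (G : SimpleGraph V) (v : V) (H : Set V) : Prop :=
  ∃ A : Set V, A.Nonempty ∧ A ⊆ (gstar G v)ᶜ ∧
    (∀ a ∈ A, ∀ b : V, SameComp G (gstar G v)ᶜ a b → b ∈ A) ∧
    (∃ c ∈ (gstar G v)ᶜ, c ∉ A) ∧
    H = gstar G v ∪ A

/-- The complement halfspace of the `v`-halfspace `H`: `H^c = St(v) ∪ (Γ \ H)`. -/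
def hcompl (G : SimpleGraph V) (v : V) (H : Set V) : Set V := gstar G v ∪ Hᶜ

/-- The order on halfspaces: `(v₁,H₁) ≤ (v₂,H₂)` iff `v₁, v₂` are not adjacent and
`H₁ ⊆ H₂`.  (Reflexivity `(v,H) ≤ (v,H)` holds automatically since graphs are loopless.) -/
def hle (G : SimpleGraph V) (v₁ : V) (H₁ : Set V) (v₂ : V) (H₂ : Set V) : Prop :=
  ¬ G.Adj v₁ v₂ ∧ H₁ ⊆ H₂


lemma mem_gstar_iff {G : SimpleGraph V} {v x : V} : x ∈ gstar G v ↔ x = v ∨ G.Adj v x := by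
  simp [gstar]

lemma not_mem_gstar {G : SimpleGraph V} {v x : V} (h1 : x ≠ v) (h2 : ¬ G.Adj v x) :
    x ∉ gstar G v := by simp [mem_gstar_iff, h1, h2]

lemma sameComp_of_adj {G : SimpleGraph V} {s : Set V} {a b : V}
    (ha : a ∈ s) (hb : b ∈ s) (hab : G.Adj a b) : SameComp G s a b :=
  ⟨ha, hb, SimpleGraph.Adj.reachable (by simpa using hab)⟩

lemma gstar_subset_of_halfspace {G : SimpleGraph V} {v : V} {H : Set V}
    (h : IsHalfspace G v H) : gstar G v ⊆ H := by
  obtain ⟨A, -, -, -, -, rfl⟩ := h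
  exact Set.subset_union_left

lemma walk_false {G : SimpleGraph V} {v₁ v₂ : V} {A₁ A₂ : Set V}
    (hadj : ¬ G.Adj v₁ v₂)
    (hA₁sub : A₁ ⊆ (gstar G v₁)ᶜ)
    (hA₁cl : ∀ a ∈ A₁, ∀ b : V, SameComp G (gstar G v₁)ᶜ a b → b ∈ A₁)
    (hA₂cl : ∀ a ∈ A₂, ∀ b : V, SameComp G (gstar G v₂)ᶜ a b → b ∈ A₂)
    (hsub : gstar G v₁ ∪ A₁ ⊆ gstar G v₂ ∪ A₂)
    (hv₂A₁ : v₂ ∈ A₁) :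
    ∀ (x z : ((G.neighborSet v₁ ∩ G.neighborSet v₂)ᶜ : Set V))
      (w : (G.induce ((G.neighborSet v₁ ∩ G.neighborSet v₂)ᶜ)).Walk x z),
      z.val = v₂ → x.val ∉ gstar G v₂ → x.val ∉ A₂ → False := by
  intro x z w
  induction w with
  | nil => intro hz hst _; exact hst (mem_gstar_iff.2 (Or.inl hz))
  | @cons x y _ ha w ih =>
    intro hz hst hA
    obtain ⟨xv, hxmem⟩ := x
    obtain ⟨yv, hymem⟩ := y
    have hGadj : G.Adj xv yv := by simpa using ha
    by_cases hy : yv ∈ gstar G v₂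
    · -- y in the star of v₂
      have hyne : yv ≠ v₂ := by
        intro he
        subst he
        exact hst (mem_gstar_iff.2 (Or.inr hGadj.symm))
      have hylk2 : G.Adj v₂ yv := (mem_gstar_iff.1 hy).resolve_left hyne
      have hynlk1 : ¬ G.Adj v₁ yv := fun h1 => hymem ⟨h1, hylk2⟩
      have hynev1 : yv ≠ v₁ := by
        rintro rfl
        exact hadj hylk2.symm
      have hys1 : yv ∈ (gstar G v₁)ᶜ := not_mem_gstar hynev1 hynlk1
      have hyA₁ : yv ∈ A₁ :=
        hA₁cl v₂ hv₂A₁ yv (sameComp_of_adj (hA₁sub hv₂A₁) hys1 hylk2)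
      have hxH2 : xv ∉ gstar G v₂ ∪ A₂ := by
        rintro (h' | h')
        · exact hst h'
        · exact hA h'
      have hxH1 : xv ∉ gstar G v₁ ∪ A₁ := fun h' => hxH2 (hsub h')
      have hx1 : xv ∈ (gstar G v₁)ᶜ := fun h' => hxH1 (Or.inl h')
      exact hxH1 (Or.inr (hA₁cl yv hyA₁ xv (sameComp_of_adj hys1 hx1 hGadj.symm)))
    · -- y outside the star of v₂: stays outside A₂
      have hyA : yv ∉ A₂ := by
        intro hyA₂
        exact hA (hA₂cl yv hyA₂ xv (sameComp_of_adj hy hst hGadj.symm))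
      exact ih hz hy hyA

/-- The key lemma: if `v₁ ≠ v₂` are non-adjacent and `H₁ ⊆ H₂`, then `v₂ ∉ H₁`. -/
lemma key_lemma {G : SimpleGraph V} (h : TypeII G) {v₁ v₂ : V} {H₁ H₂ : Set V}
    (hne : v₁ ≠ v₂) (hadj : ¬ G.Adj v₁ v₂)
    (h1 : IsHalfspace G v₁ H₁) (h2 : IsHalfspace G v₂ H₂) (hsub : H₁ ⊆ H₂) :
    v₂ ∉ H₁ := by
  intro hv2H1
  obtain ⟨A₁, -, hA₁sub, hA₁cl, -, rfl⟩ := h1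
  obtain ⟨A₂, -, hA₂sub, hA₂cl, ⟨c, hcs, hcA⟩, rfl⟩ := h2
  have hv₂st : v₂ ∉ gstar G v₁ := not_mem_gstar hne.symm hadj
  have hv₂A₁ : v₂ ∈ A₁ := hv2H1.resolve_left hv₂st
  have hv₂s : v₂ ∈ ((G.neighborSet v₁ ∩ G.neighborSet v₂)ᶜ : Set V) := by
    intro hmem
    exact G.irrefl hmem.2
  have hcs' : c ∈ ((G.neighborSet v₁ ∩ G.neighborSet v₂)ᶜ : Set V) := by
    intro hmem
    exact hcs (Set.mem_insert_iff.2 (Or.inr hmem.2))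
  obtain ⟨w⟩ := (h.2 v₁ v₂ hne).preconnected ⟨c, hcs'⟩ ⟨v₂, hv₂s⟩
  exact walk_false hadj hA₁sub hA₁cl hA₂cl hsub hv₂A₁ ⟨c, hcs'⟩ ⟨v₂, hv₂s⟩ w rfl
    (fun h' => hcs h') hcA

/-- for Γ of type II, the set of pairs `(v, H)` with `H` a `v`-halfspace,
equipped with the order `hle` and the involution `(v,H) ↦ (v,H^c)`, is a pocset:
(a) `hle` is a partial order (reflexive, antisymmetric, transitive);
(b) `(v₁,H₁) ≤ (v₂,H₂)` implies `(v₂,H₂^c) ≤ (v₁,H₁^c)`;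
(c) `(v,H)` and `(v,H^c)` are distinct and incomparable. -/
theorem stmt_15 [Fintype V] (G : SimpleGraph V) (h : TypeII G) :
    -- (a) reflexivity
    (∀ v : V, ∀ H : Set V, IsHalfspace G v H → hle G v H v H) ∧
    -- (a) antisymmetry: comparable in both directions forces equality of pairs
    (∀ v₁ H₁ v₂ H₂, IsHalfspace G v₁ H₁ → IsHalfspace G v₂ H₂ →
      hle G v₁ H₁ v₂ H₂ → hle G v₂ H₂ v₁ H₁ → v₁ = v₂ ∧ H₁ = H₂) ∧
    -- (a) transitivity
    (∀ v₁ H₁ v₂ H₂ v₃ H₃, IsHalfspace G v₁ H₁ → IsHalfspace G v₂ H₂ →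
      IsHalfspace G v₃ H₃ → hle G v₁ H₁ v₂ H₂ → hle G v₂ H₂ v₃ H₃ →
      hle G v₁ H₁ v₃ H₃) ∧
    -- (b) order reversal under the involution
    (∀ v₁ H₁ v₂ H₂, IsHalfspace G v₁ H₁ → IsHalfspace G v₂ H₂ →
      hle G v₁ H₁ v₂ H₂ → hle G v₂ (hcompl G v₂ H₂) v₁ (hcompl G v₁ H₁)) ∧
    -- (c) `(v,H)` and `(v,H^c)` are distinct and incomparable
    (∀ v : V, ∀ H : Set V, IsHalfspace G v H →
      H ≠ hcompl G v H ∧ ¬ hle G v H v (hcompl G v H) ∧ ¬ hle G v (hcompl G v H) v H) := by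
  refine ⟨?_, ?_, ?_, ?_, ?_⟩
  · -- reflexivity
    intro v H _
    exact ⟨fun ha => G.irrefl ha, subset_rfl⟩
  · -- antisymmetry
    rintro v₁ H₁ v₂ H₂ h1 h2 ⟨hadj, hsub⟩ ⟨hadj', hsub'⟩
    have hHeq : H₁ = H₂ := Set.Subset.antisymm hsub hsub'
    refine ⟨?_, hHeq⟩
    by_contra hne
    have hv₂ : v₂ ∉ H₁ := key_lemma h hne hadj h1 h2 hsub
    exact hv₂ (hsub' (gstar_subset_of_halfspace h2 (Set.mem_insert _ _)))
  · -- transitivity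
    rintro v₁ H₁ v₂ H₂ v₃ H₃ h1 h2 h3 ⟨h12, s12⟩ ⟨h23, s23⟩
    refine ⟨?_, s12.trans s23⟩
    intro hadj13
    by_cases h12e : v₁ = v₂
    · exact h23 (h12e ▸ hadj13)
    · by_cases h23e : v₂ = v₃
      · exact h12 (h23e ▸ hadj13)
      · have hv₃H₂ : v₃ ∈ H₂ :=
          s12 (gstar_subset_of_halfspace h1 (mem_gstar_iff.2 (Or.inr hadj13)))
        exact key_lemma h h23e h23 h2 h3 s23 hv₃H₂
  · -- order reversal
    rintro v₁ H₁ v₂ H₂ h1 h2 ⟨hadj, hsub⟩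
    refine ⟨fun ha => hadj ha.symm, ?_⟩
    rintro x (hx | hx)
    · -- x ∈ gstar v₂
      by_cases he : v₁ = v₂
      · exact Or.inl (he ▸ hx)
      · by_cases hxH1 : x ∈ H₁
        · obtain ⟨A₁, hA₁ne, hA₁sub, hA₁cl, hA₁w, rfl⟩ := h1
          have h1' : IsHalfspace G v₁ (gstar G v₁ ∪ A₁) :=
            ⟨A₁, hA₁ne, hA₁sub, hA₁cl, hA₁w, rfl⟩
          have hv₂ : v₂ ∉ gstar G v₁ ∪ A₁ := key_lemma h he hadj h1' h2 hsub
          rcases hxH1 with hxg | hxA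
          · exact Or.inl hxg
          · exfalso
            rcases mem_gstar_iff.1 hx with rfl | hadj2x
            · exact hv₂ (Or.inr hxA)
            · have hv₂c : v₂ ∈ (gstar G v₁)ᶜ :=
                not_mem_gstar (Ne.symm he) hadj
              exact hv₂ (Or.inr (hA₁cl x hxA v₂
                (sameComp_of_adj (hA₁sub hxA) hv₂c hadj2x.symm)))
        · exact Or.inr hxH1
    · -- x ∈ H₂ᶜ
      exact Or.inr (fun hxH1 => hx (hsub hxH1))
  · -- (v,H) and (v,H^c) distinct and incomparable
    rintro v H ⟨A, ⟨a, haA⟩, hAsub, hAcl, ⟨c, hcs, hcA⟩, rfl⟩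
    have haH : a ∈ gstar G v ∪ A := Or.inr haA
    have hanc : a ∉ hcompl G v (gstar G v ∪ A) := by
      rintro (h' | h')
      · exact hAsub haA h'
      · exact h' haH
    have hcH : c ∉ gstar G v ∪ A := by
      rintro (h' | h')
      · exact hcs h'
      · exact hcA h'
    have hcHc : c ∈ hcompl G v (gstar G v ∪ A) := Or.inr hcH
    refine ⟨fun he => hanc (he ▸ haH), ?_, ?_⟩
    · rintro ⟨-, hs⟩
      exact hanc (hs haH)
    · rintro ⟨-, hs⟩
      exact hcH (hs hcHc)
end
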